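/- Let A be a finite nonempty set, let p : A → [0,1] be a probability mass function (Σ_{a∈A} p(a) = 1), and let Q : A → ℝ. For τ ∈ (0,1) let m_τ be the unique minimizer over m ∈ ℝ of Σ_{a∈A} p(a)·L₂^τ(Q(a) − m). Then (i) m_τ ≤ max_{a : p(a)>0} Q(a) for every τ ∈ (0,1), and (ii) lim_{τ→1⁻} m_τ = max_{a : p(a)>0} Q(a); i.e., the upper expectile of the Q-values under p recovers, in the limit τ → 1, the maximum of Q restricted to the support of p. -/

import Mathlib

/-- The asymmetric squared loss `L₂^τ(u) = |τ − 𝟙(u<0)|·u²`, i.e. `τu²` for `u ≥ 0` and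
`(1−τ)u²` for `u < 0` (for `τ ∈ (0,1)`). -/
noncomputable def expectileLoss (τ u : ℝ) : ℝ := if u < 0 then (1 - τ) * u ^ 2 else τ * u ^ 2

private lemma el_nonneg {τ : ℝ} (h0 : 0 ≤ τ) (h1 : τ ≤ 1) (u : ℝ) : 0 ≤ expectileLoss τ u := by
  unfold expectileLoss
  split <;> nlinarith [sq_nonneg u]

private lemma el_nonpos {τ u : ℝ} (hu : u ≤ 0) : expectileLoss τ u = (1 - τ) * u ^ 2 := by
  rcases eq_or_lt_of_le hu with h | h
  · simp [expectileLoss, h]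
  · simp [expectileLoss, h]

private lemma el_pos {τ u : ℝ} (hu : 0 < u) : expectileLoss τ u = τ * u ^ 2 := by
  simp [expectileLoss, not_lt.2 hu.le]

/-- local part of Theorem 1: let `p` be a probability mass function on a
finite nonempty set `A`, `Q : A → ℝ`, and for each `τ ∈ (0,1)` let `m τ` be the minimizer
of `Σ_a p(a)·L₂^τ(Q(a) − m)`. Then (i) `m τ` is at most the maximum of `Q` over the support
of `p`, for every `τ ∈ (0,1)`, and (ii) `m τ` converges to that maximum as `τ → 1⁻`. -/
theorem expectile_le_and_tendsto_max_on_support {A : Type*} [Fintype A] [Nonempty A]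
    (p : A → ℝ) (hp : ∀ a, 0 ≤ p a) (hsum : ∑ a, p a = 1)
    (Q : A → ℝ)
    (m : ℝ → ℝ)
    (hm : ∀ τ ∈ Set.Ioo (0 : ℝ) 1, ∀ m' : ℝ,
      ∑ a, p a * expectileLoss τ (Q a - m τ) ≤ ∑ a, p a * expectileLoss τ (Q a - m')) :
    (∀ τ ∈ Set.Ioo (0 : ℝ) 1, m τ ≤ sSup {x : ℝ | ∃ a, 0 < p a ∧ x = Q a}) ∧
      Filter.Tendsto m (nhdsWithin 1 (Set.Iio 1))
        (nhds (sSup {x : ℝ | ∃ a, 0 < p a ∧ x = Q a})) := by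
  obtain ⟨a₁, ha₁⟩ : ∃ a, 0 < p a := by
    by_contra h
    push_neg at h
    have hz : ∀ a, p a = 0 := fun a => le_antisymm (h a) (hp a)
    rw [Finset.sum_congr rfl (fun a _ => hz a)] at hsum
    simp at hsum
  set t : Finset ℝ := (Finset.univ.filter fun a => 0 < p a).image Q with ht_def
  have ht : t.Nonempty := ⟨Q a₁, by
    simp only [ht_def, Finset.mem_image, Finset.mem_filter, Finset.mem_univ, true_and]
    exact ⟨a₁, ha₁, rfl⟩⟩
  have hset : {x : ℝ | ∃ a, 0 < p a ∧ x = Q a} = ↑t := by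
    ext x
    simp only [Set.mem_setOf_eq, ht_def, Finset.coe_image, Set.mem_image, Finset.mem_coe,
      Finset.mem_filter, Finset.mem_univ, true_and]
    constructor
    · rintro ⟨a, ha, rfl⟩; exact ⟨a, ha, rfl⟩
    · rintro ⟨a, ha, rfl⟩; exact ⟨a, ha, rfl⟩
  set M := t.max' ht with hM_def
  have hsup : sSup {x : ℝ | ∃ a, 0 < p a ∧ x = Q a} = M := by
    rw [hset]; exact ht.csSup_eq_max'
  have hQle : ∀ a, 0 < p a → Q a ≤ M := fun a ha =>
    t.le_max' _ (by
      simp only [ht_def, Finset.mem_image, Finset.mem_filter, Finset.mem_univ, true_and]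
      exact ⟨a, ha, rfl⟩)
  obtain ⟨a₀, ha₀, hQa₀⟩ : ∃ a, 0 < p a ∧ Q a = M := by
    have hmem := t.max'_mem ht
    simp only [ht_def, Finset.mem_image, Finset.mem_filter, Finset.mem_univ, true_and] at hmem
    obtain ⟨a, ha, h⟩ := hmem
    exact ⟨a, ha, h⟩
  have key₁ : ∀ τ ∈ Set.Ioo (0:ℝ) 1, m τ ≤ M := by
    rintro τ ⟨hτ0, hτ1⟩
    by_contra hlt
    push_neg at hlt
    have h := hm τ ⟨hτ0, hτ1⟩ M
    have hstrict : ∑ a, p a * expectileLoss τ (Q a - M)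
        < ∑ a, p a * expectileLoss τ (Q a - m τ) := by
      apply Finset.sum_lt_sum
      · intro a _
        rcases eq_or_lt_of_le (hp a) with hpa | hpa
        · rw [← hpa]; simp
        · apply mul_le_mul_of_nonneg_left _ (hp a)
          have h1 : Q a ≤ M := hQle a hpa
          have h2 : Q a - m τ < 0 := by linarith
          rw [el_nonpos (by linarith : Q a - M ≤ 0), el_nonpos h2.le]
          have hsq : (Q a - M)^2 ≤ (Q a - m τ)^2 := by nlinarith
          exact mul_le_mul_of_nonneg_left hsq (by linarith)
      · refine ⟨a₀, Finset.mem_univ a₀, ?_⟩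
        rw [hQa₀, sub_self]
        have hz : expectileLoss τ (0:ℝ) = 0 := by simp [expectileLoss]
        rw [hz, mul_zero]
        have h2 : M - m τ < 0 := by linarith
        rw [el_nonpos h2.le]
        have hsq : 0 < (M - m τ)^2 := by nlinarith [mul_pos_of_neg_of_neg h2 h2]
        have hpos : 0 < (1 - τ) * (M - m τ)^2 := mul_pos (by linarith) hsq
        exact mul_pos ha₀ hpos
    linarith
  rw [hsup]
  refine ⟨key₁, ?_⟩
  rw [Metric.tendsto_nhdsWithin_nhds]
  intro ε hε
  set C : ℝ := ∑ a, p a * (Q a - M)^2 with hC_def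
  have hC0 : 0 ≤ C := Finset.sum_nonneg fun a _ => mul_nonneg (hp a) (sq_nonneg _)
  refine ⟨min (1/2) (p a₀ * ε^2 / (2 * (C + 1))), lt_min (by norm_num) (by positivity), ?_⟩
  intro τ hτIio hdist
  rw [Real.dist_eq] at hdist ⊢
  have hτ1 : τ < 1 := hτIio
  have hδhalf : min (1/2) (p a₀ * ε^2 / (2 * (C + 1))) ≤ 1/2 := min_le_left _ _
  have hτlb : 1 - min (1/2) (p a₀ * ε^2 / (2 * (C + 1))) < τ := by
    rw [abs_of_nonpos (by linarith)] at hdist; linarith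
  have hτhalf : 1/2 < τ := by linarith
  have hτ0 : 0 < τ := by linarith
  have hmle : m τ ≤ M := key₁ τ ⟨hτ0, hτ1⟩
  have hgt : M - ε < m τ := by
    by_contra hcon
    push_neg at hcon
    have hlow : p a₀ * (τ * ε^2) ≤ ∑ a, p a * expectileLoss τ (Q a - m τ) := by
      calc p a₀ * (τ * ε^2) ≤ p a₀ * expectileLoss τ (Q a₀ - m τ) := by
            have hpos : 0 < Q a₀ - m τ := by rw [hQa₀]; linarith
            rw [el_pos hpos]
            apply mul_le_mul_of_nonneg_left _ ha₀.le
            apply mul_le_mul_of_nonneg_left _ hτ0.le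
            have hε' : ε ≤ Q a₀ - m τ := by rw [hQa₀]; linarith
            nlinarith
        _ ≤ ∑ a, p a * expectileLoss τ (Q a - m τ) :=
            Finset.single_le_sum (f := fun a => p a * expectileLoss τ (Q a - m τ))
              (fun a _ => mul_nonneg (hp a) (el_nonneg hτ0.le hτ1.le _))
              (Finset.mem_univ a₀)
    have hup : ∑ a, p a * expectileLoss τ (Q a - M) ≤ (1 - τ) * C := by
      rw [hC_def, Finset.mul_sum]
      apply Finset.sum_le_sum
      intro a _
      rcases eq_or_lt_of_le (hp a) with hpa | hpa
      · rw [← hpa]; simp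
      · rw [el_nonpos (by linarith [hQle a hpa] : Q a - M ≤ 0)]
        exact le_of_eq (by ring)
    have hmin := hm τ ⟨hτ0, hτ1⟩ M
    have h1 : p a₀ * (τ * ε^2) ≤ (1 - τ) * C := le_trans hlow (le_trans hmin hup)
    have h2 : (1 - τ) * C ≤ (1 - τ) * (C + 1) := by nlinarith
    have hd2 : 1 - τ < p a₀ * ε^2 / (2 * (C + 1)) :=
      lt_of_lt_of_le (sub_lt_comm.mp hτlb) (min_le_right _ _)
    have h3 : (1 - τ) * (C + 1) < p a₀ * ε^2 / 2 := by
      calc (1 - τ) * (C + 1) < (p a₀ * ε^2 / (2 * (C + 1))) * (C + 1) :=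
            mul_lt_mul_of_pos_right hd2 (by linarith)
        _ = p a₀ * ε^2 / 2 := by field_simp
    have h4 : p a₀ * ε^2 / 2 < p a₀ * (τ * ε^2) := by
      nlinarith [mul_pos (by linarith : (0:ℝ) < τ - 1/2)
        (mul_pos ha₀ (by positivity : (0:ℝ) < ε^2))]
    linarith
  rw [abs_of_nonpos (by linarith)]
  linarith
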